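/- Let G be a complex m×n matrix, b ∈ ℂⁿ, let w(t) = exp(t M)(b, 0) with blocks (r(t), s(t)), and let x(t) = ∫₀ᵗ r(τ) dτ. Then for every t ≥ 0 the algebraic residual identity b − Gᴴ G x(t) = r(t) − Gᴴ s(t) holds; equivalently, with q(t) := G x(t) − s(t), one has r(t) = b − Gᴴ q(t) and s(t) = G x(t) − q(t) for all t ≥ 0. -/

import Mathlib

open scoped Matrix ComplexInnerProductSpace
open Filter MeasureTheory

noncomputable section

/-- `ℂ^k` with the ℓ² norm. -/
abbrev Evec (k : ℕ) : Type := EuclideanSpace ℂ (Fin k)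

/-- The joint space `ℂⁿ ⊕ ℂᵐ` with the ℓ² norm. -/
abbrev Jvec (n m : ℕ) : Type := EuclideanSpace ℂ (Fin n ⊕ Fin m)

/-- A complex matrix viewed as a continuous linear map between Euclidean spaces,
so that `‖matCLM A‖` is the induced ℓ² operator norm. -/
noncomputable def matCLM {α β : Type*} [Fintype α] [Fintype β] [DecidableEq β]
    (A : Matrix α β ℂ) : EuclideanSpace ℂ β →L[ℂ] EuclideanSpace ℂ α :=
  LinearMap.toContinuousLinearMap (Matrix.toEuclideanLin A)

/-- The block matrix `M = [[0, -Gᴴ], [G, -I]]` on `ℂⁿ ⊕ ℂᵐ`. -/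
def blockM {m n : ℕ} (G : Matrix (Fin m) (Fin n) ℂ) :
    Matrix (Fin n ⊕ Fin m) (Fin n ⊕ Fin m) ℂ :=
  Matrix.fromBlocks 0 (-Gᴴ) G (-1)

/-- The matrix exponential `exp (t M)` as a continuous linear map on `ℂⁿ ⊕ ℂᵐ`. -/
noncomputable def expM {m n : ℕ} (G : Matrix (Fin m) (Fin n) ℂ) (t : ℝ) :
    Jvec n m →L[ℂ] Jvec n m :=
  NormedSpace.exp (t • matCLM (blockM G))

/-- Join two blocks into a joint vector. -/
def joinV {n m : ℕ} (r : Evec n) (s : Evec m) : Jvec n m :=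
  (WithLp.equiv 2 _).symm (Sum.elim ((WithLp.equiv 2 _) r) ((WithLp.equiv 2 _) s))

/-- First (residual `r`) block of a joint vector. -/
def rblock {n m : ℕ} (w : Jvec n m) : Evec n :=
  (WithLp.equiv 2 _).symm fun i => w (Sum.inl i)

/-- Second (residual `s`) block of a joint vector. -/
def sblock {n m : ℕ} (w : Jvec n m) : Evec m :=
  (WithLp.equiv 2 _).symm fun j => w (Sum.inr j)

/-- Residual dynamics `w(t) = exp (t M) (b, 0)`. -/
noncomputable def wdyn {m n : ℕ} (G : Matrix (Fin m) (Fin n) ℂ) (b : Evec n) (t : ℝ) :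
    Jvec n m :=
  expM G t (joinV b 0)

/-- Accumulator `x(t) = ∫₀ᵗ r(τ) dτ`. -/
noncomputable def xacc {m n : ℕ} (G : Matrix (Fin m) (Fin n) ℂ) (b : Evec n) (t : ℝ) :
    Evec n :=
  ∫ τ in (0:ℝ)..t, rblock (wdyn G b τ)

/-!
Write `w = (r, s)` and let `L w := r - Gᴴ s`. Since `M (r, s) = (-Gᴴ s, G r - s)`, one has
`L (M w) = -Gᴴ G r`, so along the flow `d/dt L (w t) = -Gᴴ G r t = -Gᴴ G (x' t)`. Hence
`L (w t) + Gᴴ G (x t)` is constant, equal to its value `b` at `t = 0`.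
-/

section MatCLM

variable {α β γ : Type*} [Fintype α] [Fintype β] [Fintype γ] [DecidableEq β] [DecidableEq γ]

lemma matCLM_apply (A : Matrix α β ℂ) (v : EuclideanSpace ℂ β) (i : α) :
    matCLM A v i = (A *ᵥ ⇑v) i := rfl

lemma matCLM_mul (A : Matrix α β ℂ) (B : Matrix β γ ℂ) (v : EuclideanSpace ℂ γ) :
    matCLM (A * B) v = matCLM A (matCLM B v) := by
  ext i
  simp only [matCLM_apply, ← Matrix.mulVec_mulVec]
  rfl

end MatCLM

lemma hasDerivAt_exp_smul_apply {E : Type*} [NormedAddCommGroup E] [NormedSpace ℂ E]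
    [CompleteSpace E] (A : E →L[ℂ] E) (v : E) (t : ℝ) :
    HasDerivAt (fun u : ℝ => NormedSpace.exp (u • A) v) (A (NormedSpace.exp (t • A) v)) t :=
  ((ContinuousLinearMap.apply ℂ E v).restrictScalars ℝ).hasFDerivAt.comp_hasDerivAt t
    (hasDerivAt_exp_smul_const' (𝕂 := ℝ) A t)

section Blocks

def rblockCLM (n m : ℕ) : Jvec n m →L[ℂ] Evec n :=
  LinearMap.toContinuousLinearMap
    { toFun := rblock
      map_add' := fun _ _ => rfl
      map_smul' := fun _ _ => rfl }

def sblockCLM (n m : ℕ) : Jvec n m →L[ℂ] Evec m :=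
  LinearMap.toContinuousLinearMap
    { toFun := sblock
      map_add' := fun _ _ => rfl
      map_smul' := fun _ _ => rfl }

variable {m n : ℕ}

@[simp] lemma rblock_joinV (r : Evec n) (s : Evec m) : rblock (joinV r s) = r := rfl

@[simp] lemma sblock_joinV (r : Evec n) (s : Evec m) : sblock (joinV r s) = s := rfl

lemma ofLp_eq_sum_elim (w : Jvec n m) : w.ofLp = Sum.elim (rblock w).ofLp (sblock w).ofLp := by
  funext k
  cases k <;> rfl

lemma rblock_matCLM_blockM (G : Matrix (Fin m) (Fin n) ℂ) (w : Jvec n m) :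
    rblock (matCLM (blockM G) w) = -matCLM Gᴴ (sblock w) := by
  ext i
  change (blockM G *ᵥ w.ofLp) (Sum.inl i) = _
  rw [ofLp_eq_sum_elim, blockM, Matrix.fromBlocks_mulVec]
  simp [matCLM_apply, Matrix.neg_mulVec]

lemma sblock_matCLM_blockM (G : Matrix (Fin m) (Fin n) ℂ) (w : Jvec n m) :
    sblock (matCLM (blockM G) w) = matCLM G (rblock w) - sblock w := by
  ext j
  change (blockM G *ᵥ w.ofLp) (Sum.inr j) = _
  rw [ofLp_eq_sum_elim, blockM, Matrix.fromBlocks_mulVec]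
  simp [matCLM_apply, Matrix.neg_mulVec, sub_eq_add_neg]

end Blocks

section Dynamics

variable {m n : ℕ} (G : Matrix (Fin m) (Fin n) ℂ) (b : Evec n)

lemma hasDerivAt_wdyn (t : ℝ) :
    HasDerivAt (wdyn G b) (matCLM (blockM G) (wdyn G b t)) t :=
  hasDerivAt_exp_smul_apply _ _ t

lemma continuous_wdyn : Continuous (wdyn G b) :=
  continuous_iff_continuousAt.2 fun t => (hasDerivAt_wdyn G b t).continuousAt

lemma hasDerivAt_xacc (t : ℝ) : HasDerivAt (xacc G b) (rblock (wdyn G b t)) t := by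
  have hr : Continuous fun τ => rblock (wdyn G b τ) :=
    (rblockCLM n m).continuous.comp (continuous_wdyn G b)
  exact intervalIntegral.integral_hasDerivAt_right (hr.intervalIntegrable _ _)
    hr.stronglyMeasurable.stronglyMeasurableAtFilter hr.continuousAt

lemma wdyn_zero : wdyn G b 0 = joinV b 0 := by
  rw [wdyn, expM, zero_smul ℝ (matCLM (blockM G)), NormedSpace.exp_zero,
    one_apply_eq_self]

lemma xacc_zero : xacc G b 0 = 0 :=
  intervalIntegral.integral_same

def residualCLM : Jvec n m →L[ℂ] Evec n :=
  rblockCLM n m - (matCLM Gᴴ).comp (sblockCLM n m)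

lemma residualCLM_apply (w : Jvec n m) :
    residualCLM G w = rblock w - matCLM Gᴴ (sblock w) := rfl

lemma residualCLM_matCLM_blockM (w : Jvec n m) :
    residualCLM G (matCLM (blockM G) w) = -matCLM (Gᴴ * G) (rblock w) := by
  rw [residualCLM_apply, rblock_matCLM_blockM, sblock_matCLM_blockM, map_sub, matCLM_mul]
  abel

lemma residual_add_gram_xacc (t : ℝ) :
    rblock (wdyn G b t) - matCLM Gᴴ (sblock (wdyn G b t)) + matCLM (Gᴴ * G) (xacc G b t) = b := by
  set f : ℝ → Evec n := fun t => residualCLM G (wdyn G b t) + matCLM (Gᴴ * G) (xacc G b t)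
  have hf : ∀ u, HasDerivAt f 0 u := fun u => by
    have hL : HasDerivAt (fun t => residualCLM G (wdyn G b t))
        (residualCLM G (matCLM (blockM G) (wdyn G b u))) u :=
      ((residualCLM G).restrictScalars ℝ).hasFDerivAt.comp_hasDerivAt u (hasDerivAt_wdyn G b u)
    have hX : HasDerivAt (fun t => matCLM (Gᴴ * G) (xacc G b t))
        (matCLM (Gᴴ * G) (rblock (wdyn G b u))) u :=
      ((matCLM (Gᴴ * G)).restrictScalars ℝ).hasFDerivAt.comp_hasDerivAt u (hasDerivAt_xacc G b u)
    have h := hL.add hX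
    rwa [residualCLM_matCLM_blockM, neg_add_cancel] at h
  calc _ = f t := rfl
    _ = f 0 := is_const_of_deriv_eq_zero (fun u => (hf u).differentiableAt)
        (fun u => (hf u).deriv) t 0
    _ = b := by simp [f, residualCLM_apply, wdyn_zero, xacc_zero]

end Dynamics

theorem stmt9_algebraic_residual_identity_general {m n : ℕ}
    (G : Matrix (Fin m) (Fin n) ℂ) (b : Evec n) :
    ∀ t : ℝ, 0 ≤ t →
      b - matCLM (Gᴴ * G) (xacc G b t) =
        rblock (wdyn G b t) - matCLM Gᴴ (sblock (wdyn G b t)) ∧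
      rblock (wdyn G b t) =
        b - matCLM Gᴴ (matCLM G (xacc G b t) - sblock (wdyn G b t)) ∧
      sblock (wdyn G b t) =
        matCLM G (xacc G b t) - (matCLM G (xacc G b t) - sblock (wdyn G b t)) := by
  intro t _
  have key := residual_add_gram_xacc G b t
  refine ⟨(eq_sub_of_add_eq key).symm, ?_, (sub_sub_cancel _ _).symm⟩
  rw [map_sub, ← matCLM_mul]
  linear_combination (norm := module) key

theorem stmt9_algebraic_residual_identity {m n : ℕ} (hm : 0 < m) (hn : 0 < n)
    (G : Matrix (Fin m) (Fin n) ℂ) (b : Evec n) :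
    ∀ t : ℝ, 0 ≤ t →
      b - matCLM (Gᴴ * G) (xacc G b t) =
        rblock (wdyn G b t) - matCLM Gᴴ (sblock (wdyn G b t)) ∧
      rblock (wdyn G b t) =
        b - matCLM Gᴴ (matCLM G (xacc G b t) - sblock (wdyn G b t)) ∧
      sblock (wdyn G b t) =
        matCLM G (xacc G b t) - (matCLM G (xacc G b t) - sblock (wdyn G b t)) :=
  stmt9_algebraic_residual_identity_general G b
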